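/- Let A be a bounded operator on H and let p ≥ 1 be a real exponent. Then ber(A)^{2p} ≤ (1/2) · ( ber(|A|^p ∘ |A*|^p) + (1/2) · ( ‖|A|^{2p}‖ + ‖|A*|^{2p}‖ ) ), where ∘ denotes operator composition, ‖·‖ denotes the operator norm, and the powers of |A| and |A*| are defined by continuous functional calculus. -/

import Mathlib

noncomputable section
open ContinuousLinearMap

variable {H : Type*} [NormedAddCommGroup H] [InnerProductSpace ℂ H] [CompleteSpace H]
variable {Ω : Type*}

/-- The Berezin radius `ber(A) = sup_{λ∈Ω} |⟨A κ(λ), κ(λ)⟩|`. -/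
def ber (κ : Ω → H) (A : H →L[ℂ] H) : ℝ :=
  ⨆ l : Ω, ‖(inner ℂ (A (κ l)) (κ l) : ℂ)‖

/-- The Berezin norm `‖A‖_ber = sup_{λ,μ∈Ω} |⟨A κ(λ), κ(μ)⟩|`. -/
def berNorm (κ : Ω → H) (A : H →L[ℂ] H) : ℝ :=
  ⨆ q : Ω × Ω, ‖(inner ℂ (A (κ q.1)) (κ q.2) : ℂ)‖

/-- `N_{S,p}(A) = sup_{λ,μ∈Ω} S(|⟨A κ(λ), κ(μ)⟩|^p, |⟨A* κ(λ), κ(μ)⟩|^p)`. -/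
def NS (S : ℝ → ℝ → ℝ) (p : ℝ) (κ : Ω → H) (A : H →L[ℂ] H) : ℝ :=
  ⨆ q : Ω × Ω, S (‖(inner ℂ (A (κ q.1)) (κ q.2) : ℂ)‖ ^ p)
    (‖(inner ℂ ((adjoint A) (κ q.1)) (κ q.2) : ℂ)‖ ^ p)

/-- `|X| = (X*X)^{1/2}` via continuous functional calculus. -/
def absOp (X : H →L[ℂ] H) : H →L[ℂ] H := cfc Real.sqrt (adjoint X * X)

/-- `h(|X|)^r` : continuous functional calculus of `|X|` applied to `s ↦ h(s)^r`. -/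
def opApply (h : ℝ → ℝ) (r : ℝ) (X : H →L[ℂ] H) : H →L[ℂ] H :=
  cfc (fun s : ℝ => h s ^ r) (absOp X)

local notation "⟪" x ", " y "⟫" => @inner ℂ _ _ x y


lemma my_sa_TA (A : H →L[ℂ] H) : IsSelfAdjoint (adjoint A * A) := by
  rw [← star_eq_adjoint]; exact IsSelfAdjoint.star_mul_self A

lemma my_sa_AT (A : H →L[ℂ] H) : IsSelfAdjoint (A * adjoint A) := by
  have : A * adjoint A = adjoint (adjoint A) * adjoint A := by rw [adjoint_adjoint]
  rw [this]; exact my_sa_TA (adjoint A)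

lemma my_nonneg_TA (A : H →L[ℂ] H) : 0 ≤ adjoint A * A := by
  rw [← star_eq_adjoint]; exact star_mul_self_nonneg A

lemma my_nonneg_AT (A : H →L[ℂ] H) : 0 ≤ A * adjoint A := by
  have : A * adjoint A = adjoint (adjoint A) * adjoint A := by rw [adjoint_adjoint]
  rw [this]; exact my_nonneg_TA (adjoint A)

/-- inner product monotonicity from operator order -/
lemma my_inner_mono {S T : H →L[ℂ] H} (h : S ≤ T) (x : H) :
    RCLike.re ⟪S x, x⟫ ≤ RCLike.re ⟪T x, x⟫ := by
  have h2 := ((le_def S T).mp h).inner_nonneg_left x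
  simp only [reApplyInnerSelf, sub_apply, inner_sub_left, map_sub] at h2
  have h3 := (Complex.nonneg_iff.mp h2).1
  simp only [Complex.sub_re] at h3
  simp only [RCLike.re_to_complex]
  linarith

lemma my_inner_nonneg {T : H →L[ℂ] H} (h : 0 ≤ T) (x : H) :
    0 ≤ RCLike.re ⟪T x, x⟫ := by
  simpa using my_inner_mono h x

/-- selfadjoint operators have real quadratic forms -/
lemma my_inner_real {T : H →L[ℂ] H} (h : IsSelfAdjoint T) (x : H) :
    (⟪T x, x⟫ : ℂ) = (RCLike.re ⟪T x, x⟫ : ℝ) := by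
  have hadj : adjoint T = T := by rw [← star_eq_adjoint]; exact h.star_eq
  have hconj : (starRingEnd ℂ) ⟪T x, x⟫ = ⟪T x, x⟫ := by
    calc (starRingEnd ℂ) ⟪T x, x⟫ = ⟪x, T x⟫ := by rw [inner_conj_symm]
      _ = ⟪T x, x⟫ := by conv_lhs => rw [← hadj, adjoint_inner_right]
  exact (RCLike.conj_eq_iff_re.mp hconj).symm

lemma my_inner_symm {T : H →L[ℂ] H} (h : IsSelfAdjoint T) (x y : H) :
    ⟪T x, y⟫ = ⟪x, T y⟫ := by
  have hadj : adjoint T = T := by rw [← star_eq_adjoint]; exact h.star_eq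
  conv_rhs => rw [← hadj, adjoint_inner_right]

lemma my_norm_inner_of_nonneg {T : H →L[ℂ] H} (h : 0 ≤ T) (x : H) :
    ‖(⟪T x, x⟫ : ℂ)‖ = RCLike.re ⟪T x, x⟫ := by
  have hsa : IsSelfAdjoint T := IsSelfAdjoint.of_nonneg h
  rw [my_inner_real hsa]
  simp only [RCLike.re_to_complex, Complex.norm_real, Complex.ofReal_re, Real.norm_eq_abs]
  exact abs_of_nonneg (by simpa using my_inner_nonneg h x)

/-- Buzano's inequality -/
lemma my_buzano (x u v : H) (hx : ‖x‖ = 1) :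
    2 * ‖(⟪x, u⟫ : ℂ) * ⟪v, x⟫‖ ≤ ‖u‖ * ‖v‖ + ‖(⟪v, u⟫ : ℂ)‖ := by
  set c : ℂ := ⟪x, u⟫ with hc
  set w : H := (2 * c) • x - u with hw
  have hcc : RCLike.re ((starRingEnd ℂ) (2 * c) * c) = 2 * ‖c‖ ^ 2 := by
    have h0 : (starRingEnd ℂ) (2 * c) * c = ((2 * ‖c‖ ^ 2 : ℝ) : ℂ) := by
      rw [map_mul (starRingEnd ℂ), mul_assoc, RCLike.conj_mul]
      simp only [RCLike.I_to_complex, map_ofNat]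
      push_cast
      ring_nf
      rfl
    rw [h0]
    simp
    norm_cast
  have hwn : ‖w‖ = ‖u‖ := by
    have h1 : ‖w‖ ^ 2 = ‖u‖ ^ 2 := by
      rw [hw, norm_sub_sq (𝕜 := ℂ), inner_smul_left, hcc, norm_smul, hx]
      simp only [mul_one, mul_pow]
      have : ‖(2 : ℂ) * c‖ = 2 * ‖c‖ := by rw [norm_mul]; norm_num
      rw [this]
      ring
    nlinarith [norm_nonneg w, norm_nonneg u]
  have hkey : 2 * (c * ⟪v, x⟫) = ⟪v, w⟫ + ⟪v, u⟫ := by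
    rw [hw, inner_sub_right, inner_smul_right]
    ring
  have h2 : ‖(2 : ℂ) * (c * ⟪v, x⟫)‖ ≤ ‖v‖ * ‖w‖ + ‖(⟪v, u⟫ : ℂ)‖ := by
    rw [show ((2:ℂ) * (c * ⟪v, x⟫)) = ⟪v, w⟫ + ⟪v, u⟫ from hkey]
    exact (norm_add_le _ _).trans (by gcongr; exact norm_inner_le_norm v w)
  rw [hwn] at h2
  calc 2 * ‖c * ⟪v, x⟫‖ = ‖(2:ℂ) * (c * ⟪v,x⟫)‖ := by rw [norm_mul]; norm_num
    _ ≤ ‖v‖ * ‖u‖ + ‖(⟪v, u⟫ : ℂ)‖ := h2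
    _ = ‖u‖ * ‖v‖ + ‖(⟪v, u⟫ : ℂ)‖ := by ring

lemma my_poly_approx (f : ℝ → ℝ) (hf : Continuous f) (a b : ℝ) {ε : ℝ} (hε : 0 < ε) :
    ∃ q : Polynomial ℝ, ∀ t ∈ Set.Icc a b, |f t - q.eval t| ≤ ε := by
  set g : C(Set.Icc a b, ℝ) := (ContinuousMap.mk f hf).restrict (Set.Icc a b) with hgdef
  have hg : g ∈ (polynomialFunctions (Set.Icc a b)).topologicalClosure := by
    rw [polynomialFunctions_closure_eq_top a b]; trivial
  have hg2 : g ∈ closure ((polynomialFunctions (Set.Icc a b)) : Set C(Set.Icc a b, ℝ)) := hg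
  rw [Metric.mem_closure_iff] at hg2
  obtain ⟨q', hq', hdist⟩ := hg2 ε hε
  rw [polynomialFunctions_coe] at hq'
  obtain ⟨q, rfl⟩ := hq'
  refine ⟨q, fun t ht => ?_⟩
  have h3 := ContinuousMap.dist_apply_le_dist (f := g) (g := q.toContinuousMapOnAlgHom (Set.Icc a b)) ⟨t, ht⟩
  rw [Real.dist_eq] at h3
  have : g ⟨t, ht⟩ = f t := rfl
  have h4 : (q.toContinuousMapOnAlgHom (Set.Icc a b)) ⟨t, ht⟩ = q.eval t := rfl
  rw [this, h4] at h3
  exact h3.trans (le_of_lt hdist)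

lemma my_aeval_comm (A : H →L[ℂ] H) (q : Polynomial ℝ) :
    A * (Polynomial.aeval (adjoint A * A) q) = (Polynomial.aeval (A * adjoint A) q) * A := by
  have hpow : ∀ n : ℕ, A * (adjoint A * A) ^ n = (A * adjoint A) ^ n * A := by
    intro n
    induction n with
    | zero => simp
    | succ n ih =>
      calc A * (adjoint A * A) ^ (n + 1)
          = (A * (adjoint A * A) ^ n) * (adjoint A * A) := by rw [pow_succ, ← mul_assoc]
        _ = ((A * adjoint A) ^ n * A) * (adjoint A * A) := by rw [ih]
        _ = (A * adjoint A) ^ n * (A * adjoint A) * A := by simp only [mul_assoc]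
        _ = (A * adjoint A) ^ (n + 1) * A := by rw [pow_succ]
  induction q using Polynomial.induction_on' with
  | add p q hp hq => simp only [map_add, mul_add, add_mul, hp, hq]
  | monomial n a =>
    rw [Polynomial.aeval_monomial, Polynomial.aeval_monomial]
    calc A * (algebraMap ℝ _ a * (adjoint A * A) ^ n)
        = algebraMap ℝ _ a * (A * (adjoint A * A) ^ n) := by
          rw [← mul_assoc, ← Algebra.commutes, mul_assoc]
      _ = algebraMap ℝ _ a * ((A * adjoint A) ^ n * A) := by rw [hpow]
      _ = algebraMap ℝ _ a * (A * adjoint A) ^ n * A := by rw [mul_assoc]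

set_option maxHeartbeats 1000000 in
lemma my_mul_cfc_comm (A : H →L[ℂ] H) {f : ℝ → ℝ} (hf : Continuous f) :
    A * cfc f (adjoint A * A) = cfc f (A * adjoint A) * A := by
  have hT : IsSelfAdjoint (adjoint A * A) := my_sa_TA A
  have hS : IsSelfAdjoint (A * adjoint A) := my_sa_AT A
  set M : ℝ := max (‖adjoint A * A‖ * ‖(1 : H →L[ℂ] H)‖) (‖A * adjoint A‖ * ‖(1 : H →L[ℂ] H)‖) with hM
  have hsubT : spectrum ℝ (adjoint A * A) ⊆ Set.Icc (-M) M := by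
    intro t ht
    have h1 := spectrum.norm_le_norm_mul_of_mem ht
    rw [Real.norm_eq_abs] at h1
    have h2 : |t| ≤ M := h1.trans (le_max_left _ _)
    exact ⟨neg_le_of_abs_le h2, le_of_abs_le h2⟩
  have hsubS : spectrum ℝ (A * adjoint A) ⊆ Set.Icc (-M) M := by
    intro t ht
    have h1 := spectrum.norm_le_norm_mul_of_mem ht
    rw [Real.norm_eq_abs] at h1
    have h2 : |t| ≤ M := h1.trans (le_max_right _ _)
    exact ⟨neg_le_of_abs_le h2, le_of_abs_le h2⟩
  have key : ∀ ε : ℝ, 0 < ε → ‖A * cfc f (adjoint A * A) - cfc f (A * adjoint A) * A‖ ≤ ε * (2 * ‖A‖) := by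
    intro ε hε
    obtain ⟨q, hq⟩ := my_poly_approx f hf (-M) M hε
    have hnT : ‖cfc f (adjoint A * A) - cfc q.eval (adjoint A * A)‖ ≤ ε := by
      rw [(cfc_sub (fun t => f t) q.eval (adjoint A * A) hf.continuousOn (by fun_prop)).symm]
      exact norm_cfc_le hε.le (fun t ht => by rw [Real.norm_eq_abs]; exact hq t (hsubT ht))
    have hnS : ‖cfc f (A * adjoint A) - cfc q.eval (A * adjoint A)‖ ≤ ε := by
      rw [(cfc_sub (fun t => f t) q.eval (A * adjoint A) hf.continuousOn (by fun_prop)).symm]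
      exact norm_cfc_le hε.le (fun t ht => by rw [Real.norm_eq_abs]; exact hq t (hsubS ht))
    have hpq : A * cfc q.eval (adjoint A * A) = cfc q.eval (A * adjoint A) * A := by
      rw [cfc_polynomial q (adjoint A * A) hT, cfc_polynomial q (A * adjoint A) hS]
      exact my_aeval_comm A q
    have hsplit : A * cfc f (adjoint A * A) - cfc f (A * adjoint A) * A
        = A * (cfc f (adjoint A * A) - cfc q.eval (adjoint A * A))
          - (cfc f (A * adjoint A) - cfc q.eval (A * adjoint A)) * A := by
      rw [mul_sub, sub_mul, hpq]; abel
    rw [hsplit]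
    calc ‖A * (cfc f (adjoint A * A) - cfc q.eval (adjoint A * A))
          - (cfc f (A * adjoint A) - cfc q.eval (A * adjoint A)) * A‖
        ≤ ‖A * (cfc f (adjoint A * A) - cfc q.eval (adjoint A * A))‖
          + ‖(cfc f (A * adjoint A) - cfc q.eval (A * adjoint A)) * A‖ := norm_sub_le _ _
      _ ≤ ‖A‖ * ε + ε * ‖A‖ := by
          refine add_le_add ((norm_mul_le _ _).trans ?_) ((norm_mul_le _ _).trans ?_)
          · exact mul_le_mul_of_nonneg_left hnT (norm_nonneg A)
          · exact mul_le_mul_of_nonneg_right hnS (norm_nonneg A)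
      _ = ε * (2 * ‖A‖) := by ring
  have h0 : ‖A * cfc f (adjoint A * A) - cfc f (A * adjoint A) * A‖ ≤ 0 := by
    refine le_of_forall_pos_le_add fun ε hε => ?_
    have hε' : (0:ℝ) < ε / (2 * ‖A‖ + 1) := by positivity
    have h1 := key _ hε'
    have h2 : ε / (2 * ‖A‖ + 1) * (2 * ‖A‖) ≤ ε := by
      rw [div_mul_eq_mul_div, div_le_iff₀ (by positivity)]
      nlinarith [norm_nonneg A, hε.le]
    linarith
  have h3 := norm_le_zero_iff.mp h0
  exact sub_eq_zero.mp h3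

set_option maxHeartbeats 1000000 in
/-- Kato / mixed Schwarz inequality -/
lemma my_kato (A : H →L[ℂ] H) (x y : H) :
    ‖(⟪A x, y⟫ : ℂ)‖ ^ 2
      ≤ RCLike.re ⟪cfc Real.sqrt (adjoint A * A) x, x⟫
        * RCLike.re ⟪cfc Real.sqrt (A * adjoint A) y, y⟫ := by
  set T := adjoint A * A with hTdef
  set S := A * adjoint A with hSdef
  have hT : IsSelfAdjoint T := my_sa_TA A
  have hS : IsSelfAdjoint S := my_sa_AT A
  have hT0 : 0 ≤ T := my_nonneg_TA A
  have hS0 : 0 ≤ S := my_nonneg_AT A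
  have hTspec : ∀ t ∈ spectrum ℝ T, 0 ≤ t := fun t ht => spectrum_nonneg_of_nonneg hT0 ht
  have hSspec : ∀ t ∈ spectrum ℝ S, 0 ≤ t := fun t ht => spectrum_nonneg_of_nonneg hS0 ht
  set α := RCLike.re ⟪cfc Real.sqrt T x, x⟫ with hα
  set β := RCLike.re ⟪cfc Real.sqrt S y, y⟫ with hβ
  have hα0 : 0 ≤ α := my_inner_nonneg (cfc_nonneg (fun t _ => Real.sqrt_nonneg t)) x
  have hβ0 : 0 ≤ β := my_inner_nonneg (cfc_nonneg (fun t _ => Real.sqrt_nonneg t)) y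
  have hAnorm : ∀ u : H, ‖A u‖ ^ 2 = RCLike.re ⟪T u, u⟫ := by
    intro u
    have h1 : (⟪T u, u⟫ : ℂ) = ⟪A u, A u⟫ := by
      rw [hTdef, ContinuousLinearMap.mul_apply, adjoint_inner_left]
    rw [h1, inner_self_eq_norm_sq]
  have main : ∀ ε : ℝ, 0 < ε →
      ‖(⟪A x, y⟫ : ℂ)‖ ≤ Real.sqrt α * Real.sqrt β + Real.sqrt ε * (‖x‖ * ‖y‖) := by
    intro ε hε
    set m : ℝ → ℝ := fun t => max t 0 with hm
    have hmc : Continuous m := continuous_id.max continuous_const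
    have hm0 : ∀ t, 0 ≤ m t := fun t => le_max_right t 0
    have hden : ∀ t : ℝ, Real.sqrt (m t + ε) ≠ 0 := fun t => by
      have h : 0 < m t + ε := by have := hm0 t; linarith
      exact (Real.sqrt_pos.mpr h).ne'
    set g : ℝ → ℝ := fun t => Real.sqrt (Real.sqrt (m t)) / Real.sqrt (m t + ε) with hg
    set r : ℝ → ℝ := fun t => (Real.sqrt (m t) * Real.sqrt (Real.sqrt (m t))) / Real.sqrt (m t + ε)
      with hr
    set e : ℝ → ℝ := fun t => 1 - r t * g t with he
    have hgc : Continuous g := ((Real.continuous_sqrt.comp (Real.continuous_sqrt.comp hmc)).div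
      (Real.continuous_sqrt.comp (hmc.add continuous_const)) hden)
    have hrc : Continuous r := (((Real.continuous_sqrt.comp hmc).mul
      (Real.continuous_sqrt.comp (Real.continuous_sqrt.comp hmc))).div
      (Real.continuous_sqrt.comp (hmc.add continuous_const)) hden)
    have hec : Continuous e := continuous_const.sub (hrc.mul hgc)
    have hrg : ∀ t : ℝ, r t * g t = m t / (m t + ε) := by
      intro t
      rw [hr, hg]
      rw [div_mul_div_comm]
      congr 1
      · rw [mul_assoc, Real.mul_self_sqrt (Real.sqrt_nonneg _)]
        rw [Real.mul_self_sqrt (hm0 t)]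
      · rw [Real.mul_self_sqrt (by have := hm0 t; linarith)]
    have he' : ∀ t : ℝ, e t = ε / (m t + ε) := by
      intro t
      rw [he]
      simp only []
      rw [hrg t]
      have hne : m t + ε ≠ 0 := by have := hm0 t; positivity
      field_simp
      ring
    -- operator identities
    have hdecomp : cfc (fun t => r t * g t) T + cfc e T = 1 := by
      rw [← cfc_add T (fun t => r t * g t) e (hrc.mul hgc).continuousOn hec.continuousOn]
      have hfun : (fun t => r t * g t + e t) = fun _ : ℝ => (1:ℝ) := by
        funext t; rw [he]; ring
      rw [hfun, cfc_const_one ℝ T]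
    have hop : A * cfc (fun t => r t * g t) T = cfc r S * (A * cfc g T) := by
      rw [cfc_mul r g T hrc.continuousOn hgc.continuousOn, ← mul_assoc,
        my_mul_cfc_comm A hrc, mul_assoc]
    have hsum : (⟪A x, y⟫ : ℂ) = ⟪A (cfc g T x), cfc r S y⟫ + ⟪A (cfc e T x), y⟫ := by
      have h1 : A x = A (cfc (fun t => r t * g t) T x) + A (cfc e T x) := by
        rw [← map_add]
        congr 1
        have := congrArg (fun (C : H →L[ℂ] H) => C x) hdecomp
        simpa [add_apply, one_apply] using this.symm
      rw [h1, inner_add_left]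
      congr 1
      have h2 : A (cfc (fun t => r t * g t) T x) = cfc r S (A (cfc g T x)) := by
        have h3 := congrArg (fun (C : H →L[ℂ] H) => C x) hop
        simpa [mul_apply] using h3
      rw [h2]
      exact my_inner_symm (cfc_predicate r S) _ _
    -- norm of main factor 1
    have hAg : ‖A (cfc g T x)‖ ^ 2 ≤ α := by
      rw [hAnorm]
      have h1 : (⟪T (cfc g T x), cfc g T x⟫ : ℂ) = ⟪cfc (fun t => g t * t * g t) T x, x⟫ := by
        have hgsa := cfc_predicate g T
        have e1 : cfc (fun t => g t * t * g t) T = cfc g T * T * cfc g T := by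
          rw [cfc_mul (fun t => g t * t) g T ((hgc.mul continuous_id).continuousOn)
            hgc.continuousOn]
          rw [cfc_mul g (fun t : ℝ => t) T hgc.continuousOn
            (continuous_id.continuousOn : ContinuousOn (fun t : ℝ => t) _)]
          rw [cfc_id' ℝ T hT]
        rw [e1]
        simp only [ContinuousLinearMap.mul_apply]
        rw [my_inner_symm hgsa]
      rw [h1]
      refine my_inner_mono (cfc_mono (fun t ht => ?_) ((hgc.mul continuous_id).mul hgc).continuousOn
        Real.continuous_sqrt.continuousOn) x
      · have ht0 := hTspec t ht
        have hmt : m t = t := max_eq_left ht0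
        have hpos : (0:ℝ) < t + ε := by linarith
        have hd2 : Real.sqrt (t + ε) * Real.sqrt (t + ε) = t + ε := Real.mul_self_sqrt hpos.le
        have hs4 : Real.sqrt (Real.sqrt t) * Real.sqrt (Real.sqrt t) = Real.sqrt t :=
          Real.mul_self_sqrt (Real.sqrt_nonneg t)
        show g t * t * g t ≤ Real.sqrt t
        simp only [hg, hmt]
        rw [div_mul_eq_mul_div, div_mul_div_comm,
          div_le_iff₀ (by nlinarith [Real.sqrt_pos.mpr hpos] :
            (0:ℝ) < Real.sqrt (t + ε) * Real.sqrt (t + ε))]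
        have hLHS : Real.sqrt (Real.sqrt t) * t * Real.sqrt (Real.sqrt t) = Real.sqrt t * t := by
          linear_combination t * hs4
        rw [hLHS, hd2]
        have := mul_le_mul_of_nonneg_left (by linarith : t ≤ t + ε) (Real.sqrt_nonneg t)
        linarith
    -- norm of main factor 2
    have hrS : ‖cfc r S y‖ ^ 2 ≤ β := by
      have hrsa := cfc_predicate r S
      have h1 : (‖cfc r S y‖ ^ 2 : ℝ) = RCLike.re ⟪cfc (fun t => r t * r t) S y, y⟫ := by
        rw [cfc_mul r r S hrc.continuousOn hrc.continuousOn]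
        simp only [ContinuousLinearMap.mul_apply]
        rw [my_inner_symm hrsa, inner_self_eq_norm_sq]
      rw [h1]
      refine my_inner_mono (cfc_mono (fun t ht => ?_) (hrc.mul hrc).continuousOn
        Real.continuous_sqrt.continuousOn) y
      have ht0 := hSspec t ht
      have hmt : m t = t := max_eq_left ht0
      have hpos : (0:ℝ) < t + ε := by linarith
      have hd2 : Real.sqrt (t + ε) * Real.sqrt (t + ε) = t + ε := Real.mul_self_sqrt hpos.le
      have hs4 : Real.sqrt (Real.sqrt t) * Real.sqrt (Real.sqrt t) = Real.sqrt t :=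
        Real.mul_self_sqrt (Real.sqrt_nonneg t)
      have hs2 : Real.sqrt t * Real.sqrt t = t := Real.mul_self_sqrt ht0
      show r t * r t ≤ Real.sqrt t
      simp only [hr, hmt]
      rw [div_mul_div_comm,
        div_le_iff₀ (by nlinarith [Real.sqrt_pos.mpr hpos] :
          (0:ℝ) < Real.sqrt (t + ε) * Real.sqrt (t + ε))]
      have hLHS : Real.sqrt t * Real.sqrt (Real.sqrt t) * (Real.sqrt t * Real.sqrt (Real.sqrt t))
          = t * Real.sqrt t := by
        linear_combination (Real.sqrt (Real.sqrt t) * Real.sqrt (Real.sqrt t)) * hs2 + t * hs4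
      rw [hLHS, hd2]
      have := mul_le_mul_of_nonneg_left (by linarith : t ≤ t + ε) (Real.sqrt_nonneg t)
      nlinarith [Real.sqrt_nonneg t]
    -- error term
    have hErr : ‖A (cfc e T x)‖ ^ 2 ≤ ε * ‖x‖ ^ 2 := by
      rw [hAnorm]
      have hesa := cfc_predicate e T
      have h1 : (⟪T (cfc e T x), cfc e T x⟫ : ℂ) = ⟪cfc (fun t => e t * t * e t) T x, x⟫ := by
        have e1 : cfc (fun t => e t * t * e t) T = cfc e T * T * cfc e T := by
          rw [cfc_mul (fun t => e t * t) e T ((hec.mul continuous_id).continuousOn)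
            hec.continuousOn]
          rw [cfc_mul e (fun t : ℝ => t) T hec.continuousOn
            (continuous_id.continuousOn : ContinuousOn (fun t : ℝ => t) _)]
          rw [cfc_id' ℝ T hT]
        rw [e1]
        simp only [ContinuousLinearMap.mul_apply]
        rw [my_inner_symm hesa]
      rw [h1]
      have h2 : ‖cfc (fun t => e t * t * e t) T‖ ≤ ε := by
        refine norm_cfc_le hε.le (fun t ht => ?_)
        have ht0 := hTspec t ht
        have hmt : m t = t := max_eq_left ht0
        have hee : e t = ε / (t + ε) := by rw [he' t, hmt]
        have hpos : (0:ℝ) < t + ε := by linarith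
        show ‖e t * t * e t‖ ≤ ε
        rw [Real.norm_eq_abs, hee]
        rw [abs_of_nonneg (by positivity)]
        rw [div_mul_eq_mul_div, div_mul_div_comm, div_le_iff₀ (by positivity)]
        nlinarith [mul_nonneg (mul_nonneg hε.le ht0) ht0,
          mul_nonneg (mul_nonneg hε.le ht0) hε.le,
          mul_nonneg (mul_nonneg hε.le hε.le) hε.le]
      calc RCLike.re ⟪cfc (fun t => e t * t * e t) T x, x⟫
          ≤ ‖(⟪cfc (fun t => e t * t * e t) T x, x⟫ : ℂ)‖ := RCLike.re_le_norm _
        _ ≤ ‖cfc (fun t => e t * t * e t) T x‖ * ‖x‖ := norm_inner_le_norm _ _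
        _ ≤ ‖cfc (fun t => e t * t * e t) T‖ * ‖x‖ * ‖x‖ := by
            gcongr
            exact le_opNorm _ _
        _ ≤ ε * ‖x‖ ^ 2 := by nlinarith [norm_nonneg x, norm_nonneg (cfc (fun t => e t * t * e t) T)]
    -- combine
    have hb1 : ‖A (cfc g T x)‖ ≤ Real.sqrt α := by
      have := Real.sqrt_le_sqrt hAg
      rwa [Real.sqrt_sq (norm_nonneg _)] at this
    have hb2 : ‖cfc r S y‖ ≤ Real.sqrt β := by
      have := Real.sqrt_le_sqrt hrS
      rwa [Real.sqrt_sq (norm_nonneg _)] at this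
    have hb3 : ‖A (cfc e T x)‖ ≤ Real.sqrt ε * ‖x‖ := by
      have := Real.sqrt_le_sqrt hErr
      rwa [Real.sqrt_sq (norm_nonneg _), Real.sqrt_mul hε.le, Real.sqrt_sq (norm_nonneg _)]
        at this
    calc ‖(⟪A x, y⟫ : ℂ)‖ = ‖(⟪A (cfc g T x), cfc r S y⟫ : ℂ) + ⟪A (cfc e T x), y⟫‖ := by
          rw [← hsum]
      _ ≤ ‖(⟪A (cfc g T x), cfc r S y⟫ : ℂ)‖ + ‖(⟪A (cfc e T x), y⟫ : ℂ)‖ := norm_add_le _ _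
      _ ≤ ‖A (cfc g T x)‖ * ‖cfc r S y‖ + ‖A (cfc e T x)‖ * ‖y‖ :=
          add_le_add (norm_inner_le_norm _ _) (norm_inner_le_norm _ _)
      _ ≤ Real.sqrt α * Real.sqrt β + (Real.sqrt ε * ‖x‖) * ‖y‖ :=
          add_le_add (mul_le_mul hb1 hb2 (norm_nonneg _) (Real.sqrt_nonneg _))
            (mul_le_mul_of_nonneg_right hb3 (norm_nonneg _))
      _ = Real.sqrt α * Real.sqrt β + Real.sqrt ε * (‖x‖ * ‖y‖) := by ring
  have hfinal : ‖(⟪A x, y⟫ : ℂ)‖ ≤ Real.sqrt α * Real.sqrt β := by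
    refine le_of_forall_pos_le_add fun δ hδ => ?_
    have hε : (0:ℝ) < (δ / (‖x‖ * ‖y‖ + 1)) ^ 2 := by positivity
    have h1 := main _ hε
    have h2 : Real.sqrt ((δ / (‖x‖ * ‖y‖ + 1)) ^ 2) * (‖x‖ * ‖y‖) ≤ δ := by
      rw [Real.sqrt_sq (by positivity)]
      rw [div_mul_eq_mul_div, div_le_iff₀ (by positivity)]
      nlinarith [norm_nonneg x, norm_nonneg y, hδ.le, mul_nonneg (norm_nonneg x) (norm_nonneg y)]
    linarith
  calc ‖(⟪A x, y⟫ : ℂ)‖ ^ 2 ≤ (Real.sqrt α * Real.sqrt β) ^ 2 :=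
        pow_le_pow_left₀ (norm_nonneg _) hfinal 2
    _ = α * β := by rw [mul_pow, Real.sq_sqrt hα0, Real.sq_sqrt hβ0]

set_option maxHeartbeats 1000000 in
/-- Hölder–McCarthy inequality via the tangent-line trick. -/
lemma my_HM (T : H →L[ℂ] H) (hT0 : 0 ≤ T) {p : ℝ} (hp : 1 ≤ p) (x : H) (hx : ‖x‖ = 1) :
    (RCLike.re ⟪T x, x⟫) ^ p ≤ RCLike.re ⟪cfc (fun t : ℝ => t ^ p) T x, x⟫ := by
  have hT : IsSelfAdjoint T := IsSelfAdjoint.of_nonneg hT0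
  have hp0 : (0:ℝ) < p := lt_of_lt_of_le one_pos hp
  have hTspec : ∀ t ∈ spectrum ℝ T, 0 ≤ t := fun t ht => spectrum_nonneg_of_nonneg hT0 ht
  have hcont : ContinuousOn (fun t : ℝ => t ^ p) (spectrum ℝ T) :=
    (Real.continuous_rpow_const hp0.le).continuousOn
  set c := RCLike.re ⟪T x, x⟫ with hc
  have hc0 : 0 ≤ c := my_inner_nonneg hT0 x
  have hrpow_nonneg : 0 ≤ RCLike.re ⟪cfc (fun t : ℝ => t ^ p) T x, x⟫ :=
    my_inner_nonneg (cfc_nonneg (fun t ht => Real.rpow_nonneg (hTspec t ht) p)) x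
  rcases eq_or_lt_of_le hc0 with hceq | hclt
  · rw [← hceq, Real.zero_rpow hp0.ne']
    exact hrpow_nonneg
  have hscalar : ∀ t ∈ spectrum ℝ T, p * c ^ (p - 1) * t - (p - 1) * c ^ p ≤ t ^ p := by
    intro t ht
    have ht0 := hTspec t ht
    have hcp : (0:ℝ) ≤ c ^ p := Real.rpow_nonneg hc0 p
    rcases eq_or_lt_of_le ht0 with hteq | htlt
    · rw [← hteq, Real.zero_rpow hp0.ne', mul_zero]
      have h1 : (0:ℝ) ≤ (p - 1) * c ^ p := mul_nonneg (by linarith) hcp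
      linarith
    · have key := Real.geom_mean_le_arith_mean2_weighted (w₁ := 1/p) (w₂ := 1 - 1/p)
        (p₁ := t ^ p) (p₂ := c ^ p) (by positivity)
        (by rw [sub_nonneg, div_le_one hp0]; exact hp)
        (Real.rpow_nonneg ht0 p) hcp (by field_simp; ring)
      have e1 : (t ^ p) ^ (1/p : ℝ) = t := by
        rw [← Real.rpow_mul ht0, mul_one_div, div_self hp0.ne', Real.rpow_one]
      have e2 : (c ^ p) ^ (1 - 1/p : ℝ) = c ^ (p - 1) := by
        rw [← Real.rpow_mul hc0]
        have hxp : p * (1 - 1/p) = p - 1 := by field_simp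
        rw [hxp]
      rw [e1, e2] at key
      have key2 := mul_le_mul_of_nonneg_left key hp0.le
      calc p * c ^ (p - 1) * t - (p - 1) * c ^ p
          = p * (t * c ^ (p - 1)) - (p - 1) * c ^ p := by ring
        _ ≤ p * (1/p * t ^ p + (1 - 1/p) * c ^ p) - (p - 1) * c ^ p := by linarith
        _ = t ^ p := by
            have hA : p * (1/p) = 1 := by field_simp
            have hB : p * (1 - 1/p) = p - 1 := by field_simp
            rw [mul_add, ← mul_assoc, hA, ← mul_assoc, hB, one_mul]
            ring
  have hkey : cfc (fun t : ℝ => p * c ^ (p - 1) * t - (p - 1) * c ^ p) T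
      ≤ cfc (fun t : ℝ => t ^ p) T :=
    cfc_mono hscalar (by fun_prop) hcont
  have h2 := my_inner_mono hkey x
  have e3 : cfc (fun t : ℝ => p * c ^ (p - 1) * t - (p - 1) * c ^ p) T
      = (p * c ^ (p - 1)) • T - ((p - 1) * c ^ p) • (1 : H →L[ℂ] H) := by
    rw [cfc_sub (fun t : ℝ => p * c ^ (p - 1) * t) (fun _ : ℝ => (p - 1) * c ^ p) T
      (by fun_prop) (by fun_prop)]
    rw [cfc_const_mul_id (p * c ^ (p - 1)) T hT, cfc_const ((p - 1) * c ^ p) T hT,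
      Algebra.algebraMap_eq_smul_one]
  have e4 : RCLike.re ⟪((p * c ^ (p - 1)) • T - ((p - 1) * c ^ p) • (1 : H →L[ℂ] H)) x, x⟫
      = p * c ^ (p - 1) * c - (p - 1) * c ^ p := by
    simp only [sub_apply, smul_apply, one_apply, inner_sub_left]
    rw [map_sub]
    rw [RCLike.real_smul_eq_coe_smul (K := ℂ), inner_smul_left, RCLike.conj_ofReal, RCLike.re_ofReal_mul]
    rw [RCLike.real_smul_eq_coe_smul (K := ℂ), inner_smul_left, RCLike.conj_ofReal, RCLike.re_ofReal_mul]
    rw [ContinuousLinearMap.one_apply, inner_self_eq_norm_sq, hx, ← hc]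
    ring
  rw [e3, e4] at h2
  have e5 : c ^ (p - 1) * c = c ^ p := by
    have h := Real.rpow_add_one hclt.ne' (p - 1)
    rw [sub_add_cancel] at h
    exact h.symm
  have e6 : p * c ^ (p - 1) * c = p * c ^ p := by rw [mul_assoc, e5]
  linarith


set_option maxHeartbeats 2000000 in
theorem stmt6 [Nonempty Ω] (κ : Ω → H) (hκ : ∀ l, ‖κ l‖ = 1)
    (A : H →L[ℂ] H) (p : ℝ) (hp : 1 ≤ p) :
    ber κ A ^ (2 * p)
      ≤ (1 / 2) * (ber κ (opApply (fun s => s) p A * opApply (fun s => s) p (adjoint A))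
          + (1 / 2) * (‖opApply (fun s => s) (2 * p) A‖ + ‖opApply (fun s => s) (2 * p) (adjoint A)‖)) := by
  have hp0 : (0:ℝ) < p := lt_of_lt_of_le one_pos hp
  set B := absOp A with hB
  set B' := absOp (adjoint A) with hB'
  have hBsa : IsSelfAdjoint B := cfc_predicate _ _
  have hB'sa : IsSelfAdjoint B' := cfc_predicate _ _
  have hB0 : 0 ≤ B := cfc_nonneg (fun t _ => Real.sqrt_nonneg t)
  have hB'0 : 0 ≤ B' := cfc_nonneg (fun t _ => Real.sqrt_nonneg t)
  have hBspec : ∀ t ∈ spectrum ℝ B, 0 ≤ t := fun t ht => spectrum_nonneg_of_nonneg hB0 ht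
  have hB'spec : ∀ t ∈ spectrum ℝ B', 0 ≤ t := fun t ht => spectrum_nonneg_of_nonneg hB'0 ht
  set a := opApply (fun s => s) p A with ha
  set b := opApply (fun s => s) p (adjoint A) with hb
  have ha' : a = cfc (fun s : ℝ => s ^ p) B := rfl
  have hb' : b = cfc (fun s : ℝ => s ^ p) B' := rfl
  have hcontp : ContinuousOn (fun s : ℝ => s ^ p) (spectrum ℝ B) :=
    (Real.continuous_rpow_const hp0.le).continuousOn
  have hcontp' : ContinuousOn (fun s : ℝ => s ^ p) (spectrum ℝ B') :=
    (Real.continuous_rpow_const hp0.le).continuousOn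
  have ha0 : 0 ≤ a := ha' ▸ cfc_nonneg (fun t ht => Real.rpow_nonneg (hBspec t ht) p)
  have hb0 : 0 ≤ b := hb' ▸ cfc_nonneg (fun t ht => Real.rpow_nonneg (hB'spec t ht) p)
  have hasa : IsSelfAdjoint a := ha' ▸ cfc_predicate _ _
  have hbsa : IsSelfAdjoint b := hb' ▸ cfc_predicate _ _
  set N1 := ‖opApply (fun s => s) (2 * p) A‖ with hN1
  set N2 := ‖opApply (fun s => s) (2 * p) (adjoint A)‖ with hN2
  have hsqa : a * a = opApply (fun s => s) (2 * p) A := by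
    rw [ha', show opApply (fun s => s) (2 * p) A = cfc (fun s : ℝ => s ^ (2 * p)) B from rfl]
    rw [← cfc_mul (fun s : ℝ => s ^ p) (fun s : ℝ => s ^ p) B hcontp hcontp]
    apply cfc_congr
    intro s hs
    have hs0 := hBspec s hs
    show s ^ p * s ^ p = s ^ (2 * p)
    rw [two_mul, Real.rpow_add' hs0 (by positivity)]
  have hsqb : b * b = opApply (fun s => s) (2 * p) (adjoint A) := by
    rw [hb', show opApply (fun s => s) (2 * p) (adjoint A) = cfc (fun s : ℝ => s ^ (2 * p)) B'
      from rfl]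
    rw [← cfc_mul (fun s : ℝ => s ^ p) (fun s : ℝ => s ^ p) B' hcontp' hcontp']
    apply cfc_congr
    intro s hs
    have hs0 := hB'spec s hs
    show s ^ p * s ^ p = s ^ (2 * p)
    rw [two_mul, Real.rpow_add' hs0 (by positivity)]
  set ab := a * b with hab
  have hbdd : BddAbove (Set.range fun l : Ω => ‖(⟪ab (κ l), κ l⟫ : ℂ)‖) := by
    refine ⟨‖ab‖, ?_⟩
    rintro _ ⟨l, rfl⟩
    calc ‖(⟪ab (κ l), κ l⟫ : ℂ)‖ ≤ ‖ab (κ l)‖ * ‖κ l‖ := norm_inner_le_norm _ _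
      _ ≤ (‖ab‖ * ‖κ l‖) * ‖κ l‖ :=
          mul_le_mul_of_nonneg_right (le_opNorm ab (κ l)) (norm_nonneg _)
      _ = ‖ab‖ := by rw [hκ l]; ring
  have hberab : ∀ l : Ω, ‖(⟪ab (κ l), κ l⟫ : ℂ)‖ ≤ ber κ ab := by
    intro l
    have := le_ciSup hbdd l
    simpa [ber] using this
  set R := (1 / 2) * (ber κ ab + (1 / 2) * (N1 + N2)) with hR
  have hpt : ∀ l : Ω, ‖(⟪A (κ l), κ l⟫ : ℂ)‖ ^ (2 * p) ≤ R := by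
    intro l
    set x := κ l with hxdef
    have hx : ‖x‖ = 1 := hκ l
    set t := ‖(⟪A x, x⟫ : ℂ)‖ with ht
    have ht0 : 0 ≤ t := norm_nonneg _
    set α := RCLike.re ⟪B x, x⟫ with hαd
    set β := RCLike.re ⟪B' x, x⟫ with hβd
    have hα0 : 0 ≤ α := my_inner_nonneg hB0 x
    have hβ0 : 0 ≤ β := my_inner_nonneg hB'0 x
    have hkato : t ^ 2 ≤ α * β := by
      have h := my_kato A x x
      have hBB' : cfc Real.sqrt (A * adjoint A) = B' := by
        rw [hB']
        simp only [absOp, adjoint_adjoint]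
      have hBB : cfc Real.sqrt (adjoint A * A) = B := rfl
      rw [hBB', hBB] at h
      exact h
    have hHMa : α ^ p ≤ RCLike.re ⟪a x, x⟫ := by
      have h := my_HM B hB0 hp x hx
      rw [← ha'] at h
      exact h
    have hHMb : β ^ p ≤ RCLike.re ⟪b x, x⟫ := by
      have h := my_HM B' hB'0 hp x hx
      rw [← hb'] at h
      exact h
    set a1 := RCLike.re ⟪a x, x⟫ with ha1
    set b1 := RCLike.re ⟪b x, x⟫ with hb1
    have ha10 : 0 ≤ a1 := my_inner_nonneg ha0 x
    have hb10 : 0 ≤ b1 := my_inner_nonneg hb0 x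
    have hbuz := my_buzano x (a x) (b x) hx
    have hxa : (⟪x, a x⟫ : ℂ) = ((a1 : ℝ) : ℂ) := by
      rw [← inner_conj_symm, my_inner_real hasa x, ← ha1]
      exact RCLike.conj_ofReal _
    have hbx : (⟪b x, x⟫ : ℂ) = ((b1 : ℝ) : ℂ) := my_inner_real hbsa x
    have hlhs : ‖(⟪x, a x⟫ : ℂ) * ⟪b x, x⟫‖ = a1 * b1 := by
      rw [hxa, hbx, norm_mul]
      simp only [Complex.norm_real, Real.norm_eq_abs]
      rw [abs_of_nonneg ha10, abs_of_nonneg hb10]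
    have hba : (⟪b x, a x⟫ : ℂ) = ⟪ab x, x⟫ := by
      rw [hab, ContinuousLinearMap.mul_apply]
      exact (my_inner_symm hasa (b x) x).symm
    have hna : ‖a x‖ ^ 2 ≤ N1 := by
      have h1 : (⟪(a * a) x, x⟫ : ℂ) = ⟪a x, a x⟫ := by
        rw [ContinuousLinearMap.mul_apply]
        exact my_inner_symm hasa (a x) x
      have h2 : (‖a x‖ : ℝ) ^ 2 = RCLike.re ⟪(a * a) x, x⟫ := by
        rw [h1, inner_self_eq_norm_sq]
      rw [h2]
      calc RCLike.re ⟪(a * a) x, x⟫ ≤ ‖(⟪(a * a) x, x⟫ : ℂ)‖ := RCLike.re_le_norm _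
        _ ≤ ‖(a * a) x‖ * ‖x‖ := norm_inner_le_norm _ _
        _ ≤ (‖a * a‖ * ‖x‖) * ‖x‖ :=
            mul_le_mul_of_nonneg_right (le_opNorm _ _) (norm_nonneg _)
        _ = ‖a * a‖ := by rw [hx]; ring
        _ = N1 := by rw [hsqa]
    have hnb : ‖b x‖ ^ 2 ≤ N2 := by
      have h1 : (⟪(b * b) x, x⟫ : ℂ) = ⟪b x, b x⟫ := by
        rw [ContinuousLinearMap.mul_apply]
        exact my_inner_symm hbsa (b x) x
      have h2 : (‖b x‖ : ℝ) ^ 2 = RCLike.re ⟪(b * b) x, x⟫ := by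
        rw [h1, inner_self_eq_norm_sq]
      rw [h2]
      calc RCLike.re ⟪(b * b) x, x⟫ ≤ ‖(⟪(b * b) x, x⟫ : ℂ)‖ := RCLike.re_le_norm _
        _ ≤ ‖(b * b) x‖ * ‖x‖ := norm_inner_le_norm _ _
        _ ≤ (‖b * b‖ * ‖x‖) * ‖x‖ :=
            mul_le_mul_of_nonneg_right (le_opNorm _ _) (norm_nonneg _)
        _ = ‖b * b‖ := by rw [hx]; ring
        _ = N2 := by rw [hsqb]
    have hprod : ‖a x‖ * ‖b x‖ ≤ (N1 + N2) / 2 := by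
      nlinarith [sq_nonneg (‖a x‖ - ‖b x‖), norm_nonneg (a x), norm_nonneg (b x)]
    have hberx : ‖(⟪ab x, x⟫ : ℂ)‖ ≤ ber κ ab := by
      have h := hberab l
      rwa [← hxdef] at h
    have hmain : a1 * b1 ≤ (1 / 2) * (ber κ ab + (1 / 2) * (N1 + N2)) := by
      rw [hlhs] at hbuz
      rw [hba] at hbuz
      linarith [hberx, hprod, hbuz]
    calc t ^ (2 * p) = (t ^ 2) ^ p := by
          rw [Real.rpow_mul ht0]
          norm_cast
      _ ≤ (α * β) ^ p := Real.rpow_le_rpow (by positivity) hkato hp0.le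
      _ = α ^ p * β ^ p := Real.mul_rpow hα0 hβ0
      _ ≤ a1 * b1 := mul_le_mul hHMa hHMb (Real.rpow_nonneg hβ0 p) ha10
      _ ≤ R := hmain
  have hber_nonneg : 0 ≤ ber κ A := Real.iSup_nonneg (fun l => norm_nonneg _)
  have hR0 : 0 ≤ R := by
    obtain ⟨l⟩ := ‹Nonempty Ω›
    exact le_trans (Real.rpow_nonneg (norm_nonneg _) _) (hpt l)
  have hble : ber κ A ≤ R ^ ((1:ℝ) / (2 * p)) := by
    rw [ber]
    apply ciSup_le
    intro l
    have h1 := hpt l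
    have h2 : (‖(⟪A (κ l), κ l⟫ : ℂ)‖ ^ (2 * p)) ^ ((1:ℝ) / (2 * p)) ≤ R ^ ((1:ℝ) / (2 * p)) :=
      Real.rpow_le_rpow (Real.rpow_nonneg (norm_nonneg _) _) h1 (by positivity)
    rwa [← Real.rpow_mul (norm_nonneg _), mul_one_div,
      div_self (by positivity : (2 * p) ≠ 0), Real.rpow_one] at h2
  calc ber κ A ^ (2 * p) ≤ (R ^ ((1:ℝ) / (2 * p))) ^ (2 * p) :=
        Real.rpow_le_rpow hber_nonneg hble (by positivity)
    _ = R := by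
        rw [← Real.rpow_mul hR0, one_div, inv_mul_cancel₀ (by positivity : (2 * p) ≠ 0),
          Real.rpow_one]
    _ = (1 / 2) * (ber κ ab + (1 / 2) * (N1 + N2)) := hR
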